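/- arXiv:math-ph/0106025 — 2 statements merged into one kernel-verified Lean document; each statement's English description precedes it below -/
import Mathlib

section
/- Let φ ∈ H¹((0, a/2)) with φ(0) = 0 (the Neumann condition at a/2 being encoded via the sine basis), expanded as φ = Σ_{j≥1} s_j φ_j where φ_j(x) = (2/√a) sin(π(2j−1)x/a) and Σ s_j² = 1. If −6π²/a² < α < 0, then Σ_{j≥2} s_j² (π/a)² 4j(j−1) + α(2 Σ_{j≥1} s_j s_{j+1} − s₁²) ≥ 0. -/
open Real

private noncomputable def mtW (j : ℕ) : ℝ := if j = 1 then 1/3 else 1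

private lemma mtW_pos (j : ℕ) : 0 < mtW j := by
  unfold mtW; split <;> norm_num

private lemma mtW_le_one (j : ℕ) : mtW j ≤ 1 := by
  unfold mtW; split <;> norm_num

private lemma mtW_inv (j : ℕ) : 6 / mtW j ≤ 18 := by
  unfold mtW; split <;> norm_num

private lemma mtW_coeff (j : ℕ) :
    6 * mtW (j + 1) + 6 / mtW j ≤ 4 * ((j : ℝ) + 2) * ((j : ℝ) + 1) := by
  match j with
  | 0 => norm_num [mtW]
  | 1 => norm_num [mtW]
  | (n+2) =>
      have h1 : mtW (n + 3) = 1 := by simp [mtW]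
      have h2 : mtW (n + 2) = 1 := by simp [mtW]
      rw [h1, h2]
      have : (0:ℝ) ≤ (n:ℝ) := Nat.cast_nonneg n
      push_cast
      nlinarith

/-- The key Fourier-coefficient inequality: for a normalized square-summable sequence
`(s_j)_{j≥1}` (here `s (j+1)` stands for `s_j`) and `-6π²/a² < α < 0`,
`Σ_{j≥2} s_j² (π/a)² 4j(j-1) + α (2 Σ_{j≥1} s_j s_{j+1} - s₁²) ≥ 0`. -/
theorem mathieu_coefficient_inequality (a α : ℝ) (ha : 0 < a)
    (hα₁ : -(6 * π ^ 2 / a ^ 2) < α) (hα₂ : α < 0)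
    (s : ℕ → ℝ)
    (hsq : Summable (fun j : ℕ => (s (j + 1)) ^ 2))
    (hnorm : (∑' j : ℕ, (s (j + 1)) ^ 2) = 1)
    (hweight : Summable (fun j : ℕ => (s (j + 2)) ^ 2 * ((j : ℝ) + 2) * ((j : ℝ) + 1))) :
    0 ≤ (∑' j : ℕ, (s (j + 2)) ^ 2 * (π / a) ^ 2 * (4 * ((j : ℝ) + 2) * ((j : ℝ) + 1)))
        + α * (2 * (∑' j : ℕ, s (j + 1) * s (j + 2)) - (s 1) ^ 2) := by
  have hc : (0:ℝ) < (π/a)^2 := by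
    have := pi_pos
    positivity
  set c := (π/a)^2 with hcdef
  have hα₁' : -(6*c) < α := by
    have h : -(6*c) = -(6 * π ^ 2 / a ^ 2) := by rw [hcdef, div_pow]; ring
    linarith [h ▸ hα₁]
  -- summability facts
  have hsq2 : Summable (fun j : ℕ => (s (j+2))^2) := by
    simpa using (summable_nat_add_iff (f := fun j : ℕ => (s (j+1))^2) 1).mpr hsq
  have hA' : Summable (fun j : ℕ => (s (j+2))^2 * (4*((j:ℝ)+2)*((j:ℝ)+1))) :=
    (hweight.mul_left 4).congr (fun j => by ring)
  have hprodabs : Summable (fun j : ℕ => |s (j+1) * s (j+2)|) := by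
    apply Summable.of_nonneg_of_le (fun j => abs_nonneg _) (fun j => ?_)
      ((hsq.add hsq2).div_const 2)
    rw [abs_mul]
    nlinarith [sq_nonneg (|s (j+1)| - |s (j+2)|), sq_abs (s (j+1)), sq_abs (s (j+2)),
      abs_nonneg (s (j+1)), abs_nonneg (s (j+2))]
  have hprod : Summable (fun j : ℕ => s (j+1) * s (j+2)) := hprodabs.of_abs
  have h1 : Summable (fun j : ℕ => 6 * mtW j * (s (j+1))^2) := by
    apply Summable.of_nonneg_of_le
      (fun j => mul_nonneg (by nlinarith [mtW_pos j]) (sq_nonneg _)) (fun j => ?_)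
      (hsq.mul_left 6)
    nlinarith [mtW_le_one j, mtW_pos j, sq_nonneg (s (j+1))]
  have h2 : Summable (fun j : ℕ => 6 / mtW j * (s (j+2))^2) := by
    apply Summable.of_nonneg_of_le
      (fun j => mul_nonneg (div_nonneg (by norm_num) (mtW_pos j).le) (sq_nonneg _))
      (fun j => ?_) (hsq2.mul_left 18)
    nlinarith [mtW_inv j, mtW_pos j, sq_nonneg (s (j+2))]
  have h3 : Summable (fun j : ℕ => 6 * mtW (j+1) * (s (j+2))^2) := by
    apply Summable.of_nonneg_of_le
      (fun j => mul_nonneg (by nlinarith [mtW_pos (j+1)]) (sq_nonneg _)) (fun j => ?_)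
      (hsq2.mul_left 6)
    nlinarith [mtW_le_one (j+1), mtW_pos (j+1), sq_nonneg (s (j+2))]
  -- pointwise AM-GM with weights
  have hpoint : ∀ j : ℕ, 12 * (s (j+1) * s (j+2))
      ≤ 6 * mtW j * (s (j+1))^2 + 6 / mtW j * (s (j+2))^2 := by
    intro j
    have ht := mtW_pos j
    rw [← sub_nonneg]
    have hid : 6 * mtW j * (s (j+1))^2 + 6 / mtW j * (s (j+2))^2 - 12 * (s (j+1) * s (j+2))
        = 6 * (mtW j * s (j+1) - s (j+2))^2 / mtW j := by
      field_simp
      ring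
    rw [hid]
    exact div_nonneg (by positivity) ht.le
  set S := ∑' j : ℕ, s (j+1) * s (j+2) with hS
  set A := ∑' j : ℕ, (s (j+2))^2 * (4*((j:ℝ)+2)*((j:ℝ)+1)) with hA
  -- the key inequality 12 S ≤ 6 s₁² + A
  have step0 : ∑' j : ℕ, 12 * (s (j+1) * s (j+2)) = 12 * S := tsum_mul_left
  have step1 : ∑' j : ℕ, 12 * (s (j+1) * s (j+2))
      ≤ ∑' j : ℕ, (6 * mtW j * (s (j+1))^2 + 6 / mtW j * (s (j+2))^2) :=
    Summable.tsum_le_tsum hpoint (hprod.mul_left 12) (h1.add h2)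
  have step2 : ∑' j : ℕ, (6 * mtW j * (s (j+1))^2 + 6 / mtW j * (s (j+2))^2)
      = (∑' j : ℕ, 6 * mtW j * (s (j+1))^2) + ∑' j : ℕ, 6 / mtW j * (s (j+2))^2 :=
    Summable.tsum_add h1 h2
  have step3 : (∑' j : ℕ, 6 * mtW j * (s (j+1))^2)
      = 6 * mtW 0 * (s 1)^2 + ∑' j : ℕ, 6 * mtW (j+1) * (s (j+2))^2 :=
    Summable.tsum_eq_zero_add h1
  have hmt0 : mtW 0 = 1 := by norm_num [mtW]
  have step4 : (∑' j : ℕ, 6 * mtW (j+1) * (s (j+2))^2) + (∑' j : ℕ, 6 / mtW j * (s (j+2))^2)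
      ≤ A := by
    rw [← Summable.tsum_add h3 h2, hA]
    apply Summable.tsum_le_tsum _ (h3.add h2) hA'
    intro j
    nlinarith [mtW_coeff j, sq_nonneg (s (j+2))]
  have key : 12 * S ≤ 6 * (s 1)^2 + A := by
    rw [hmt0] at step3
    linarith [step0 ▸ step1, step2, step3, step4]
  have hA0 : 0 ≤ A := tsum_nonneg (fun j => by positivity)
  have hfirst : (∑' j : ℕ, (s (j + 2)) ^ 2 * c * (4 * ((j : ℝ) + 2) * ((j : ℝ) + 1)))
      = c * A := by
    rw [hA, ← tsum_mul_left]
    exact tsum_congr fun j => by ring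
  rw [hfirst]
  rcases le_or_gt (2*S - (s 1)^2) 0 with hT | hT
  · have hpos : 0 ≤ α * (2*S - (s 1)^2) := by nlinarith
    nlinarith
  · have h6 : 6*(2*S - (s 1)^2) ≤ A := by linarith
    have hca : c * (6*(2*S - (s 1)^2)) ≤ c * A := mul_le_mul_of_nonneg_left h6 hc.le
    have hat : (-(6*c)) * (2*S - (s 1)^2) ≤ α * (2*S - (s 1)^2) :=
      mul_le_mul_of_nonneg_right hα₁'.le hT.le
    have hbridge : c * (6*(2*S - (s 1)^2)) + (-(6*c)) * (2*S - (s 1)^2) = 0 := by ring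
    linarith
end

section
/- For L⁻_α = −d²/dx² + 2α cos(2πx/a) on L²((0, a/2)) with boundary conditions u(0) = u'(a/2) = 0 and −6π²/a² < α < 0, the first eigenvalue satisfies μ⁻₁(α) ≥ (π/a)². -/
open Real

/-- Rayleigh quadratic form of `-d²/dx² + W` on `(c,d)`. -/
noncomputable def rayQF (W : ℝ → ℝ) (c d : ℝ) (u : ℝ → ℝ) : ℝ :=
  ∫ x in c..d, ((deriv u x) ^ 2 + W x * (u x) ^ 2)

/-- Form domain with antiperiodic boundary conditions on `(c,d)`. -/
def domAP (c d : ℝ) : Set (ℝ → ℝ) :=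
  {u | ContDiff ℝ 1 u ∧ u d = -u c ∧ deriv u d = -deriv u c}

/-- The `j`-th Courant–Fischer min-max value of `-d²/dx² + W` on `(c,d)`
with form domain `D`. -/
noncomputable def minmaxEV (W : ℝ → ℝ) (c d : ℝ) (D : Set (ℝ → ℝ)) (j : ℕ) : ℝ :=
  ⨆ v : Fin (j - 1) → (ℝ → ℝ),
    ⨅ u : {u : ℝ → ℝ // u ∈ D ∧ (∫ x in c..d, (u x) ^ 2) = 1 ∧
        ∀ i, (∫ x in c..d, u x * v i x) = 0},
      rayQF W c d u.1

/-!
Ground-state substitution: if `g' + g² ≤ W` on `(c, d]`, then for `u ∈ C¹`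
`u'² + W u² ≥ (u' - g u)² + (g u²)' ≥ (g u²)'`, hence `∫_c^d u'² + W u² ≥ [g u²]_c^d`.
For `p = π / a`, `g = p cot (p x)` solves `g' + g² = -p²` and vanishes at `a / 2`. Subtracting
`s p (27/10 sin 2px - 9/20 sin 4px + 3/40 sin 6px)` with `s = -α / (6 p²) ∈ (0, 1)` gives
`g' + g² ≤ 2α cos 2px - p²`, which reduces to the nonnegativity of a sextic in `cos 2px`.
As `u(0) = 0`, `g u² → 0` at `0`, so `∫ u'² + 2α cos (2px) u² ≥ p² ∫ u²`.
-/

open Set Filter Topology MeasureTheory Asymptotics intervalIntegral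

/-- With no orthogonality constraints left for `j = 1`, `minmaxEV` is an infimum; the witness
`hD` keeps it away from the junk value `0` of an empty infimum. -/
theorem le_minmaxEV_one {W : ℝ → ℝ} {c d k : ℝ} {D : Set (ℝ → ℝ)}
    (hD : ∃ u ∈ D, ∫ x in c..d, u x ^ 2 = 1)
    (h : ∀ u ∈ D, ∫ x in c..d, u x ^ 2 = 1 → k ≤ rayQF W c d u) :
    k ≤ minmaxEV W c d D 1 := by
  obtain ⟨u₀, hu₀, hnorm₀⟩ := hD
  have : IsEmpty (Fin (1 - 1)) := Fin.isEmpty'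
  rw [minmaxEV, ciSup_unique]
  exact @le_ciInf _ _ _ ⟨⟨u₀, hu₀, hnorm₀, isEmptyElim⟩⟩ _ _
    fun u => h u.1 u.2.1 u.2.2.1

section GroundState

variable {u g g' W : ℝ → ℝ} {c d : ℝ}

theorem ContDiff.intervalIntegrable_rayQF_integrand (hu : ContDiff ℝ 1 u)
    (hW : IntervalIntegrable W volume c d) :
    IntervalIntegrable (fun x => deriv u x ^ 2 + W x * u x ^ 2) volume c d :=
  (((hu.continuous_deriv le_rfl).pow 2).intervalIntegrable _ _).add
    (hW.mul_continuousOn (hu.continuous.pow 2).continuousOn)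

theorem rayQF_sub_const (hu : ContDiff ℝ 1 u) (hW : IntervalIntegrable W volume c d) (k : ℝ) :
    rayQF (fun x => W x - k) c d u = rayQF W c d u - k * ∫ x in c..d, u x ^ 2 := by
  have hk : Continuous fun x => k * u x ^ 2 := by fun_prop
  rw [rayQF, rayQF, ← intervalIntegral.integral_const_mul,
    ← integral_sub (hu.intervalIntegrable_rayQF_integrand hW) (hk.intervalIntegrable _ _)]
  exact integral_congr fun x _ => by ring

theorem sub_le_rayQF_of_riccati (hcd : c ≤ d) (hu : ContDiff ℝ 1 u)
    (hg : ∀ x ∈ Icc c d, HasDerivAt g (g' x) x) (hg' : ContinuousOn g' (Icc c d))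
    (hW : IntervalIntegrable W volume c d) (hric : ∀ x ∈ Icc c d, g' x + g x ^ 2 ≤ W x) :
    g d * u d ^ 2 - g c * u c ^ 2 ≤ rayQF W c d u := by
  have hgc : ContinuousOn g (Icc c d) := fun x hx => (hg x hx).continuousAt.continuousWithinAt
  have hu' : Continuous (deriv u) := hu.continuous_deriv le_rfl
  have hder : ∀ x ∈ uIcc c d, HasDerivAt (fun y => g y * u y ^ 2)
      (g' x * u x ^ 2 + g x * (2 * u x * deriv u x)) x := by
    intro x hx
    rw [uIcc_of_le hcd] at hx
    have hu2 := (hu.differentiable one_ne_zero x).hasDerivAt.fun_pow 2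
    refine ((hg x hx).fun_mul hu2).congr_deriv ?_
    push_cast
    ring
  have hint : IntervalIntegrable (fun x => g' x * u x ^ 2 + g x * (2 * u x * deriv u x))
      volume c d := by
    refine ContinuousOn.intervalIntegrable ?_
    rw [uIcc_of_le hcd]
    exact (hg'.mul (hu.continuous.pow 2).continuousOn).add
      (hgc.mul ((continuous_const.mul hu.continuous).mul hu').continuousOn)
  rw [← integral_eq_sub_of_hasDerivAt hder hint]
  refine integral_mono_on hcd hint (hu.intervalIntegrable_rayQF_integrand hW) fun x hx => ?_
  nlinarith [sq_nonneg (deriv u x - g x * u x),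
    mul_le_mul_of_nonneg_right (hric x hx) (sq_nonneg (u x))]

theorem le_rayQF_of_riccati_Ioc (hcd : c < d) (hu : ContDiff ℝ 1 u)
    (hg : ∀ x ∈ Ioc c d, HasDerivAt g (g' x) x) (hg' : ContinuousOn g' (Ioc c d))
    (hW : IntervalIntegrable W volume c d) (hric : ∀ x ∈ Ioc c d, g' x + g x ^ 2 ≤ W x)
    (hlim : Tendsto (fun x => g x * u x ^ 2) (𝓝[>] c) (𝓝 0)) :
    g d * u d ^ 2 ≤ rayQF W c d u := by
  have hF : Tendsto (fun e => rayQF W e d u) (𝓝[>] c) (𝓝 (rayQF W c d u)) := by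
    have hcont := continuousOn_primitive_interval_left
      ((intervalIntegrable_iff' (by finiteness)).1 (hu.intervalIntegrable_rayQF_integrand hW))
    rw [uIcc_of_le hcd.le] at hcont
    exact ((hcont c (left_mem_Icc.2 hcd.le)).mono_of_mem_nhdsWithin (Icc_mem_nhdsGT hcd)).tendsto
  have hbdry :
      Tendsto (fun e => g d * u d ^ 2 - g e * u e ^ 2) (𝓝[>] c) (𝓝 (g d * u d ^ 2)) := by
    simpa using tendsto_const_nhds.sub hlim
  refine le_of_tendsto_of_tendsto hbdry hF ?_
  filter_upwards [Ioo_mem_nhdsGT hcd] with e he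
  have hsub : Icc e d ⊆ Ioc c d := Icc_subset_Ioc_iff he.2.le |>.2 ⟨he.1, le_rfl⟩
  exact sub_le_rayQF_of_riccati he.2.le hu (fun x hx => hg x (hsub hx)) (hg'.mono hsub)
    (hW.mono_set <| by
      rw [uIcc_of_le he.2.le, uIcc_of_le hcd.le]; exact Icc_subset_Icc he.1.le le_rfl)
    fun x hx => hric x (hsub hx)

theorem tendsto_mul_sq_nhdsGT_of_isBigO_inv (hg : g =O[𝓝[>] c] fun x => (x - c)⁻¹)
    (hu : DifferentiableAt ℝ u c) (hu0 : u c = 0) :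
    Tendsto (fun x => g x * u x ^ 2) (𝓝[>] c) (𝓝 0) := by
  have hlin : u =O[𝓝[>] c] fun x => x - c := by
    simpa [hu0] using hu.isBigO_sub.mono nhdsWithin_le_nhds
  have hbig : (fun x => g x * u x ^ 2) =O[𝓝[>] c] fun x => (x - c)⁻¹ * ((x - c) * u x) := by
    simpa only [pow_two] using hg.mul (hlin.mul (isBigO_refl u _))
  refine hbig.trans_tendsto ?_
  have hu0' : Tendsto u (𝓝[>] c) (𝓝 0) :=
    hu0 ▸ hu.continuousAt.tendsto.mono_left nhdsWithin_le_nhds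
  refine hu0'.congr' ?_
  filter_upwards [self_mem_nhdsWithin] with x hx
  rw [← mul_assoc, inv_mul_cancel₀ (sub_ne_zero.2 (ne_of_gt hx)), one_mul]

end GroundState

section Mathieu

/-- `sin 2θ * mathieuQ (cos 2θ) = 27/10 sin 2θ - 9/20 sin 4θ + 3/40 sin 6θ`. -/
noncomputable def mathieuQ (t : ℝ) : ℝ := 21 / 8 - 9 / 10 * t + 3 / 10 * t ^ 2

noncomputable def mathieuSextic (t : ℝ) : ℝ :=
  255 + 360 * t - 471 * t ^ 2 - 2856 * t ^ 3 + 3672 * t ^ 4 - 864 * t ^ 5 + 144 * t ^ 6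

theorem mathieuSextic_nonneg (t : ℝ) : 0 ≤ mathieuSextic t := by
  unfold mathieuSextic
  nlinarith [sq_nonneg (60 * t ^ 3 - 180 * t ^ 2 - 19 * t + 72),
    sq_nonneg (993 * t ^ 2 - 700 * t - 134), sq_nonneg (500 * t - 387), sq_nonneg (t ^ 2 - t),
    sq_nonneg (t + 1), sq_nonneg (t - 1), sq_nonneg (t ^ 3 - t), sq_nonneg (t ^ 3 + t ^ 2)]

noncomputable def mathieuRiccati (p s x : ℝ) : ℝ :=
  p * (cos (p * x) / sin (p * x) - s * sin (2 * p * x) * mathieuQ (cos (2 * p * x)))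

noncomputable def mathieuRiccatiDeriv (p s x : ℝ) : ℝ :=
  -(p ^ 2 / sin (p * x) ^ 2) - 2 * s * p ^ 2 * (cos (2 * p * x) * mathieuQ (cos (2 * p * x))
    - sin (2 * p * x) ^ 2 * (-9 / 10 + 3 / 5 * cos (2 * p * x)))

variable {p s x : ℝ}

theorem hasDerivAt_mathieuRiccati (hx : sin (p * x) ≠ 0) :
    HasDerivAt (mathieuRiccati p s) (mathieuRiccatiDeriv p s x) x := by
  have hlin : ∀ k : ℝ, HasDerivAt (fun y => k * y) k x := fun k => by
    simpa using (hasDerivAt_id x).const_mul k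
  have hcos := (hasDerivAt_cos (p * x)).comp x (hlin p)
  have hsin := (hasDerivAt_sin (p * x)).comp x (hlin p)
  have hcos2 := (hasDerivAt_cos (2 * p * x)).comp x (hlin (2 * p))
  have hsin2 := (hasDerivAt_sin (2 * p * x)).comp x (hlin (2 * p))
  have hQ := ((hcos2.const_mul (9 / 10)).const_sub (21 / 8)).add
    ((hcos2.fun_pow 2).const_mul (3 / 10))
  have h := ((hcos.div hsin hx).sub ((hsin2.const_mul s).fun_mul hQ)).const_mul p
  refine h.congr_deriv ?_
  simp only [mathieuRiccatiDeriv, mathieuQ, Function.comp_apply, Pi.add_apply]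
  have := sin_sq_add_cos_sq (p * x)
  field_simp
  grind

theorem continuousOn_mathieuRiccatiDeriv :
    ContinuousOn (mathieuRiccatiDeriv p s) {x | sin (p * x) ≠ 0} := by
  unfold mathieuRiccatiDeriv mathieuQ
  exact ((continuousOn_const.div (by fun_prop) fun x hx => pow_ne_zero 2 hx).neg).sub
    (by fun_prop)

theorem mathieuRiccati_eq_zero (h : p * x = π / 2) : mathieuRiccati p s x = 0 := by
  have h2 : 2 * p * x = π := by linarith
  simp [mathieuRiccati, h, h2]

theorem mathieuRiccatiDeriv_add_sq_le (hs₀ : 0 ≤ s) (hs₁ : s ≤ 1) (hx : sin (p * x) ≠ 0) :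
    mathieuRiccatiDeriv p s x + mathieuRiccati p s x ^ 2
      ≤ -p ^ 2 - 12 * s * p ^ 2 * cos (2 * p * x) := by
  have key : mathieuRiccatiDeriv p s x + mathieuRiccati p s x ^ 2
      = -p ^ 2 - 12 * s * p ^ 2 * cos (2 * p * x)
        - s * p ^ 2 * (mathieuSextic (cos (2 * p * x)) / 1600
          + (1 - s) * (sin (2 * p * x) * mathieuQ (cos (2 * p * x))) ^ 2) := by
    simp only [mathieuRiccatiDeriv, mathieuRiccati, mathieuSextic, mathieuQ]
    rw [show 2 * p * x = 2 * (p * x) by ring, sin_two_mul, cos_two_mul]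
    have := sin_sq_add_cos_sq (p * x)
    field_simp
    grind
  have hG := mathieuSextic_nonneg (cos (2 * p * x))
  have hs : 0 ≤ 1 - s := by linarith
  rw [key, sub_le_self_iff]
  positivity

theorem mathieuRiccati_isBigO (hp : p ≠ 0) :
    mathieuRiccati p s =O[𝓝[>] 0] fun x => x⁻¹ := by
  have hsin : (fun x => (sin (p * x))⁻¹) =O[𝓝[>] 0] fun x => x⁻¹ := by
    have h : (fun x : ℝ => p * x) =O[𝓝 0] fun x => sin (p * x) := by
      have ht : Tendsto (fun x : ℝ => p * x) (𝓝 0) (𝓝 0) := by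
        simpa using (continuous_const_mul p).tendsto 0
      exact isEquivalent_sin.isBigO_symm.comp_tendsto ht
    refine ((isBigO_self_const_mul hp id _).trans h).mono nhdsWithin_le_nhds |>.inv_rev ?_
    exact Eventually.of_forall fun x hx => by simp [show x = 0 from hx]
  have hbdd : ∀ f : ℝ → ℝ, Continuous f → f =O[𝓝[>] 0] fun x => x⁻¹ := fun f hf =>
    ((hf.tendsto 0).isBigO_one ℝ).mono nhdsWithin_le_nhds |>.trans
      ((isLittleO_one_left_iff ℝ).2
        (tendsto_norm_atTop_atTop.comp tendsto_inv_nhdsGT_zero)).isBigO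
  have hcot : (fun x => cos (p * x) / sin (p * x)) =O[𝓝[>] 0] fun x => x⁻¹ := by
    simpa [div_eq_mul_inv] using
      ((continuous_cos.comp (continuous_const_mul p)).tendsto 0 |>.isBigO_one ℝ
        |>.mono nhdsWithin_le_nhds).mul hsin
  unfold mathieuRiccati mathieuQ
  exact (hcot.sub (hbdd _ (by fun_prop))).const_mul_left p

end Mathieu

theorem integral_sin_mul_sq_of_mul_eq_pi_div_two {p b : ℝ} (hp : p ≠ 0) (h : p * b = π / 2) :
    ∫ x in 0..b, sin (p * x) ^ 2 = b / 2 := by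
  rw [intervalIntegral.integral_comp_mul_left (fun x => sin x ^ 2) hp, integral_sin_sq, h]
  simp only [mul_zero, sin_zero, cos_zero, mul_one, sin_pi_div_two, cos_pi_div_two, sub_self,
    zero_add, sub_zero, smul_eq_mul]
  field_simp
  linarith

theorem mathieu_sq_mul_integral_sq_le_rayQF {a α : ℝ} {u : ℝ → ℝ} (ha : 0 < a)
    (hα₁ : -(6 * π ^ 2 / a ^ 2) < α) (hα₂ : α < 0) (hu : ContDiff ℝ 1 u) (hu0 : u 0 = 0) :
    (π / a) ^ 2 * ∫ x in 0..a / 2, u x ^ 2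
      ≤ rayQF (fun x => 2 * α * cos (2 * π * x / a)) 0 (a / 2) u := by
  set p := π / a with hp_def
  have hp : 0 < p := by positivity
  have hpa : p * (a / 2) = π / 2 := by rw [hp_def]; field_simp
  set s := -α / (6 * p ^ 2) with hs_def
  have hs₀ : 0 ≤ s := div_nonneg (by linarith) (by positivity)
  have hs₁ : s ≤ 1 := by
    rw [hs_def, div_le_one (by positivity), hp_def, div_pow]
    linarith [mul_div_assoc 6 (π ^ 2) (a ^ 2)]
  have hsin : Ioc 0 (a / 2) ⊆ {x | sin (p * x) ≠ 0} := fun x hx =>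
    (sin_pos_of_pos_of_lt_pi (mul_pos hp hx.1) (by nlinarith [hx.2])).ne'
  have hW : IntervalIntegrable (fun x => 2 * α * cos (2 * π * x / a)) volume 0 (a / 2) :=
    Continuous.intervalIntegrable (by fun_prop) _ _
  have hric : ∀ x ∈ Ioc 0 (a / 2), mathieuRiccatiDeriv p s x + mathieuRiccati p s x ^ 2
      ≤ 2 * α * cos (2 * π * x / a) - p ^ 2 := fun x hx =>
    (mathieuRiccatiDeriv_add_sq_le hs₀ hs₁ (hsin hx)).trans_eq <| by
      rw [hs_def, hp_def]
      field_simp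
      ring
  have h := le_rayQF_of_riccati_Ioc (half_pos ha) hu
    (fun x hx => hasDerivAt_mathieuRiccati (hsin hx)) (continuousOn_mathieuRiccatiDeriv.mono hsin)
    (hW.sub intervalIntegrable_const) hric
    (tendsto_mul_sq_nhdsGT_of_isBigO_inv (by simpa using mathieuRiccati_isBigO hp.ne')
      (hu.differentiable one_ne_zero 0) hu0)
  rw [mathieuRiccati_eq_zero hpa, zero_mul, rayQF_sub_const hu hW] at h
  linarith

/-- For `L⁻_α = -d²/dx² + 2α cos(2πx/a)` on `(0, a/2)` with boundary conditions
`u(0) = u'(a/2) = 0` and `-6π²/a² < α < 0`, the first eigenvalue satisfies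
`μ⁻₁(α) ≥ (π/a)²`. -/
theorem mathieu_minus_first_ev_lower (a α : ℝ) (ha : 0 < a)
    (hα₁ : -(6 * π ^ 2 / a ^ 2) < α) (hα₂ : α < 0) :
    (π / a) ^ 2 ≤
      minmaxEV (fun x => 2 * α * Real.cos (2 * π * x / a)) 0 (a / 2)
        {u : ℝ → ℝ | ContDiff ℝ 1 u ∧ u 0 = 0 ∧ deriv u (a / 2) = 0} 1 := by
  have hpa : π / a * (a / 2) = π / 2 := by field_simp
  have hground : HasDerivAt (fun x => 2 / √a * sin (π / a * x)) 0 (a / 2) := by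
    simpa [hpa] using
      ((hasDerivAt_sin _).comp _ ((hasDerivAt_id (a / 2)).const_mul (π / a))).const_mul (2 / √a)
  refine le_minmaxEV_one
    ⟨fun x => 2 / √a * sin (π / a * x), ⟨by fun_prop, by simp, hground.deriv⟩, ?_⟩
    fun u ⟨hu, hu0, _⟩ hnorm => by
      simpa [hnorm] using mathieu_sq_mul_integral_sq_le_rayQF ha hα₁ hα₂ hu hu0
  simp only [mul_pow, intervalIntegral.integral_const_mul,
    integral_sin_mul_sq_of_mul_eq_pi_div_two (by positivity) hpa, div_pow, sq_sqrt ha.le]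
  field_simp
end
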